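/- Let $0<\alpha<1$ be a real number and define, for $t>0$, $$k(t)=\sum_{m=0}^{\infty}\frac{(-1)^m\,t^{m+\alpha-1}}{m!\,\Gamma(m+\alpha)},\qquad l(t)=\sum_{m=0}^{\infty}\frac{t^{m-\alpha}}{m!\,\Gamma(m+1-\alpha)},$$ i.e. $k(t)=(\sqrt t)^{\alpha-1}J_{\alpha-1}(2\sqrt t)$ and $l(t)=(\sqrt t)^{-\alpha}I_{-\alpha}(2\sqrt t)$ where $J_{\nu}$ and $I_{\nu}$ are the Bessel and modified Bessel functions. Then $(k\ast l)(t)=\int_0^t k(t-s)l(s)\,ds=1$ for every real $t>0$; that is, the pair $(k,l)$ satisfies the Sonine condition. -/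

import Mathlib

open Real MeasureTheory

/-!
Write `φ_{β,c}(y) = ∑ₘ c^m y^(m+β-1) / (m! Γ(m+β))` (summands `wrightTerm β c y m`), so that
`k = φ_{α,-1}` and `l = φ_{1-α,1}`. Multiplying the two series (Cauchy product), integrating
termwise with the Beta integral `∫₀ᵗ s^(a-1) (t-s)^(b-1) ds = Γ(a) Γ(b) / Γ(a+b) · t^(a+b-1)` and
summing each antidiagonal by the binomial theorem gives `φ_{β,c} ∗ φ_{γ,d} = φ_{β+γ,c+d}`.
Termwise integration is legitimate because the same computation with `|c|, |d|` bounds the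
integrals of the absolute values by the convergent series `φ_{β+γ,|c|+|d|}(t)`.
Finally `φ_{1,0} = 1`.
-/

open Finset
open scoped Nat

theorem integral_rpow_mul_sub_rpow {a b c : ℝ} (ha : 0 < a) (hb : 0 < b) (hc : 0 < c) :
    ∫ s in (0:ℝ)..c, s ^ (a - 1) * (c - s) ^ (b - 1) =
      Gamma a * Gamma b / Gamma (a + b) * c ^ (a + b - 1) := by
  apply Complex.ofReal_injective
  have hbeta : Complex.betaIntegral a b = ((Gamma a * Gamma b / Gamma (a + b) : ℝ) : ℂ) := by
    rw [Complex.betaIntegral_eq_Gamma_mul_div a b (by simpa using ha) (by simpa using hb)]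
    push_cast
    rw [← Complex.ofReal_add]
    simp only [Complex.Gamma_ofReal]
  rw [← intervalIntegral.integral_ofReal, Complex.ofReal_mul, Complex.ofReal_cpow hc.le, ← hbeta,
    mul_comm, Complex.ofReal_sub, Complex.ofReal_add, Complex.ofReal_one,
    ← Complex.betaIntegral_scaled a b hc]
  refine intervalIntegral.integral_congr fun s hs => ?_
  rw [Set.uIcc_of_le hc.le] at hs
  rw [Complex.ofReal_mul, Complex.ofReal_cpow hs.1, Complex.ofReal_cpow (sub_nonneg.2 hs.2)]
  push_cast
  ring

theorem intervalIntegrable_rpow_mul_sub_rpow {a b c : ℝ} (ha : 0 < a) (hb : 0 < b) (hc : 0 < c) :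
    IntervalIntegrable (fun s : ℝ => s ^ (a - 1) * (c - s) ^ (b - 1)) volume 0 c := by
  refine intervalIntegral.intervalIntegrable_of_integral_ne_zero ?_
  rw [integral_rpow_mul_sub_rpow ha hb hc]
  have := Gamma_pos_of_pos ha
  have := Gamma_pos_of_pos hb
  have := Gamma_pos_of_pos (add_pos ha hb)
  positivity

theorem sum_antidiagonal_pow_mul_pow_div_factorial {K : Type*} [Field K] [CharZero K]
    (c d : K) (N : ℕ) :
    ∑ p ∈ antidiagonal N, c ^ p.1 * d ^ p.2 / (p.1 ! * p.2 !) = (c + d) ^ N / N ! := by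
  rw [(Commute.all c d).add_pow', sum_div]
  refine sum_congr rfl fun p hp => ?_
  rw [HasAntidiagonal.mem_antidiagonal] at hp
  subst hp
  have : ((p.1 + p.2)! : K) ≠ 0 := Nat.cast_ne_zero.2 (Nat.factorial_ne_zero _)
  rw [nsmul_eq_mul, Nat.cast_add_choose]
  field_simp

theorem Real.one_le_Gamma_of_two_le {x : ℝ} (hx : 2 ≤ x) : 1 ≤ Gamma x :=
  Gamma_two ▸ Gamma_strictMonoOn_Ici.monotoneOn Set.self_mem_Ici hx hx

noncomputable def wrightTerm (β c y : ℝ) (m : ℕ) : ℝ :=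
  c ^ m * y ^ ((m : ℝ) + β - 1) / (m.factorial * Gamma ((m : ℝ) + β))

theorem norm_wrightTerm {β : ℝ} (hβ : 0 < β) (c : ℝ) {y : ℝ} (hy : 0 ≤ y) (m : ℕ) :
    ‖wrightTerm β c y m‖ = wrightTerm β |c| y m := by
  have := Gamma_pos_of_pos (by positivity : 0 < (m : ℝ) + β)
  rw [wrightTerm, wrightTerm, Real.norm_eq_abs, abs_div, abs_mul, abs_pow,
    abs_of_nonneg (rpow_nonneg hy _), abs_of_pos (mul_pos (by positivity) this)]

theorem summable_wrightTerm {β : ℝ} (hβ : 0 < β) (c : ℝ) {y : ℝ} (hy : 0 < y) :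
    Summable (wrightTerm β c y) := by
  refine Summable.of_norm_bounded_eventually
    ((Real.summable_pow_div_factorial (|c| * y)).mul_left (y ^ (β - 1))) ?_
  rw [Nat.cofinite_eq_atTop]
  filter_upwards [Filter.eventually_ge_atTop 2] with m hm
  have hm' : (2 : ℝ) ≤ m := by exact_mod_cast hm
  have hΓ : 1 ≤ Gamma ((m : ℝ) + β) := one_le_Gamma_of_two_le (by linarith)
  rw [norm_wrightTerm hβ c hy.le, wrightTerm, mul_pow, add_sub_assoc, add_comm, rpow_add hy,
    rpow_natCast]
  have := Nat.factorial_pos m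
  calc |c| ^ m * (y ^ (β - 1) * y ^ m) / (m ! * Gamma (m + β))
      ≤ |c| ^ m * (y ^ (β - 1) * y ^ m) / (m ! * 1) := by gcongr
    _ = y ^ (β - 1) * (|c| ^ m * y ^ m / m !) := by ring

theorem summable_norm_wrightTerm {β : ℝ} (hβ : 0 < β) (c : ℝ) {y : ℝ} (hy : 0 < y) :
    Summable fun m => ‖wrightTerm β c y m‖ := by
  simpa only [norm_wrightTerm hβ c hy.le] using summable_wrightTerm hβ |c| hy

theorem tsum_wrightTerm_one_zero (t : ℝ) : ∑' N, wrightTerm 1 0 t N = 1 := by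
  rw [tsum_eq_single 0 fun N hN => by simp [wrightTerm, hN]]
  simp [wrightTerm]

section Convolution

variable {β γ t : ℝ}

theorem wrightTerm_mul_wrightTerm (c d : ℝ) (m n : ℕ) (s : ℝ) :
    wrightTerm β c (t - s) m * wrightTerm γ d s n =
      c ^ m * d ^ n / (m ! * Gamma (m + β) * (n ! * Gamma (n + γ))) *
        (s ^ ((n + γ) - 1) * (t - s) ^ ((m + β) - 1)) := by
  simp only [wrightTerm, add_sub_assoc]
  ring

theorem intervalIntegrable_wrightTerm_mul_wrightTerm (hβ : 0 < β) (hγ : 0 < γ) (ht : 0 < t)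
    (c d : ℝ) (m n : ℕ) :
    IntervalIntegrable (fun s => wrightTerm β c (t - s) m * wrightTerm γ d s n) volume 0 t := by
  simp_rw [wrightTerm_mul_wrightTerm]
  exact (intervalIntegrable_rpow_mul_sub_rpow (by positivity) (by positivity) ht).const_mul _

theorem integral_wrightTerm_mul_wrightTerm (hβ : 0 < β) (hγ : 0 < γ) (ht : 0 < t)
    (c d : ℝ) (m n : ℕ) :
    ∫ s in (0:ℝ)..t, wrightTerm β c (t - s) m * wrightTerm γ d s n =
      c ^ m * d ^ n / (m ! * n !) *
        (t ^ (((m + n : ℕ) : ℝ) + (β + γ) - 1) / Gamma (((m + n : ℕ) : ℝ) + (β + γ))) := by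
  have hΓβ := (Gamma_pos_of_pos (by positivity : 0 < (m : ℝ) + β)).ne'
  have hΓγ := (Gamma_pos_of_pos (by positivity : 0 < (n : ℝ) + γ)).ne'
  simp_rw [wrightTerm_mul_wrightTerm]
  rw [intervalIntegral.integral_const_mul,
    integral_rpow_mul_sub_rpow (by positivity) (by positivity) ht,
    show (n : ℝ) + γ + (m + β) = ((m + n : ℕ) : ℝ) + (β + γ) by push_cast; ring]
  field_simp

noncomputable def wrightCauchyTerm (β γ c d t : ℝ) (N : ℕ) (s : ℝ) : ℝ :=
  ∑ p ∈ antidiagonal N, wrightTerm β c (t - s) p.1 * wrightTerm γ d s p.2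

theorem intervalIntegrable_wrightCauchyTerm (hβ : 0 < β) (hγ : 0 < γ) (ht : 0 < t)
    (c d : ℝ) (N : ℕ) :
    IntervalIntegrable (wrightCauchyTerm β γ c d t N) volume 0 t := by
  have := IntervalIntegrable.sum (antidiagonal N) fun (p : ℕ × ℕ) _ =>
    intervalIntegrable_wrightTerm_mul_wrightTerm hβ hγ ht c d p.1 p.2
  rwa [Finset.sum_fn] at this

theorem integral_wrightCauchyTerm (hβ : 0 < β) (hγ : 0 < γ) (ht : 0 < t) (c d : ℝ) (N : ℕ) :
    ∫ s in (0:ℝ)..t, wrightCauchyTerm β γ c d t N s = wrightTerm (β + γ) (c + d) t N := by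
  unfold wrightCauchyTerm
  rw [intervalIntegral.integral_finsetSum fun p _ =>
      intervalIntegrable_wrightTerm_mul_wrightTerm hβ hγ ht c d p.1 p.2,
    sum_congr rfl fun p hp => by
      rw [integral_wrightTerm_mul_wrightTerm hβ hγ ht, HasAntidiagonal.mem_antidiagonal.1 hp],
    ← sum_mul, sum_antidiagonal_pow_mul_pow_div_factorial, wrightTerm]
  ring

theorem norm_wrightCauchyTerm_le (hβ : 0 < β) (hγ : 0 < γ) (c d : ℝ) (N : ℕ) {s : ℝ}
    (hs : s ∈ Set.Icc 0 t) :
    ‖wrightCauchyTerm β γ c d t N s‖ ≤ wrightCauchyTerm β γ |c| |d| t N s := by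
  refine (norm_sum_le _ _).trans (le_of_eq (sum_congr rfl fun p _ => ?_))
  rw [norm_mul, norm_wrightTerm hβ c (sub_nonneg.2 hs.2), norm_wrightTerm hγ d hs.1]

theorem summable_integral_norm_wrightCauchyTerm (hβ : 0 < β) (hγ : 0 < γ) (ht : 0 < t)
    (c d : ℝ) :
    Summable fun N => ∫ s in Set.Ioc 0 t, ‖wrightCauchyTerm β γ c d t N s‖ := by
  refine (summable_wrightTerm (add_pos hβ hγ) (|c| + |d|) ht).of_nonneg_of_le
    (fun N => integral_nonneg fun s => norm_nonneg _) fun N => ?_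
  rw [← integral_wrightCauchyTerm hβ hγ ht, intervalIntegral.integral_of_le ht.le]
  exact setIntegral_mono_on (intervalIntegrable_wrightCauchyTerm hβ hγ ht c d N).1.norm
    (intervalIntegrable_wrightCauchyTerm hβ hγ ht |c| |d| N).1 measurableSet_Ioc
    fun s hs => norm_wrightCauchyTerm_le hβ hγ c d N (Set.Ioc_subset_Icc_self hs)

theorem tsum_mul_tsum_wrightTerm (hβ : 0 < β) (hγ : 0 < γ) (c d : ℝ) {s : ℝ}
    (hs : s ∈ Set.Ioo 0 t) :
    (∑' m, wrightTerm β c (t - s) m) * ∑' n, wrightTerm γ d s n =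
      ∑' N, wrightCauchyTerm β γ c d t N s :=
  tsum_mul_tsum_eq_tsum_sum_antidiagonal_of_summable_norm
    (summable_norm_wrightTerm hβ c (sub_pos.2 hs.2)) (summable_norm_wrightTerm hγ d hs.1)

theorem integral_tsum_wrightTerm_mul_tsum_wrightTerm (hβ : 0 < β) (hγ : 0 < γ) (ht : 0 < t)
    (c d : ℝ) :
    ∫ s in (0:ℝ)..t, (∑' m, wrightTerm β c (t - s) m) * ∑' n, wrightTerm γ d s n =
      ∑' N, wrightTerm (β + γ) (c + d) t N := calc
  _ = ∫ s in (0:ℝ)..t, ∑' N, wrightCauchyTerm β γ c d t N s := by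
    refine intervalIntegral.integral_congr_ae ?_
    filter_upwards [Measure.ae_ne volume t] with s hst hs
    rw [Set.uIoc_of_le ht.le] at hs
    exact tsum_mul_tsum_wrightTerm hβ hγ c d ⟨hs.1, hs.2.lt_of_ne hst⟩
  _ = ∑' N, ∫ s in (0:ℝ)..t, wrightCauchyTerm β γ c d t N s := by
    simp_rw [intervalIntegral.integral_of_le ht.le]
    exact (integral_tsum_of_summable_integral_norm
      (fun N => (intervalIntegrable_wrightCauchyTerm hβ hγ ht c d N).1)
      (summable_integral_norm_wrightCauchyTerm hβ hγ ht c d)).symm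
  _ = ∑' N, wrightTerm (β + γ) (c + d) t N :=
    tsum_congr fun N => integral_wrightCauchyTerm hβ hγ ht c d N

end Convolution

/-- The Bessel-type pair `k(t) = (√t)^(α-1) J_(α-1)(2√t)`, `l(t) = (√t)^(-α) I_(-α)(2√t)`,
written via their power series, satisfies the Sonine condition. -/
theorem sonine_bessel (α : ℝ) (hα0 : 0 < α) (hα1 : α < 1) (k l : ℝ → ℝ)
    (hk : ∀ t, k t = ∑' m : ℕ,
      (-1 : ℝ) ^ m * t ^ ((m : ℝ) + α - 1) / (m.factorial * Real.Gamma ((m : ℝ) + α)))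
    (hl : ∀ t, l t = ∑' m : ℕ,
      t ^ ((m : ℝ) - α) / (m.factorial * Real.Gamma ((m : ℝ) + 1 - α)))
    (t : ℝ) (ht : 0 < t) :
    ∫ s in (0:ℝ)..t, k (t - s) * l s = 1 := by
  have hl' : ∀ s, l s = ∑' n, wrightTerm (1 - α) 1 s n := fun s => by
    rw [hl]
    congr 1 with n
    rw [wrightTerm, one_pow, one_mul, show (n : ℝ) + (1 - α) = n + 1 - α by ring,
      show (n : ℝ) + 1 - α - 1 = n - α by ring]
  have hconv := integral_tsum_wrightTerm_mul_tsum_wrightTerm hα0 (sub_pos.2 hα1) ht (-1) 1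
  rw [add_sub_cancel, neg_add_cancel, tsum_wrightTerm_one_zero] at hconv
  simp_rw [hk, hl']
  exact hconv
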